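/- arXiv:2307.04202 — 2 statements merged into one kernel-verified Lean document; each statement's English description precedes it below -/
import Mathlib

section
/- Let Q₃ : ℤ³ → ℤ be the quadratic form Q₃(a, b₁, b₂) = a² − b₁² − b₂². Let G be the subgroup of ℤ-linear automorphisms of ℤ³ generated by: the three maps negating one coordinate, the map interchanging the last two coordinates, and the reflection r(a, b₁, b₂) = (a + 2c, b₁ + 2c, b₂ + 2c) with c = a − b₁ − b₂. Then every element of G preserves Q₃, and for every α ∈ ℤ³ with Q₃(α) ≥ 0 there exists g ∈ G such that g(α) = (a, b₁, b₂) with b₁ ≥ b₂ ≥ 0 and a ≥ b₁ + b₂. -/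
/-- The intersection form of `CP² # 2CP̄²`. -/
def Q3 (v : Fin 3 → ℤ) : ℤ := v 0 ^ 2 - v 1 ^ 2 - v 2 ^ 2

/-- Negation of the `j`-th coordinate. -/
def neg3 (j : Fin 3) (v : Fin 3 → ℤ) : Fin 3 → ℤ := fun i => if i = j then -v i else v i

/-- Interchanging the last two coordinates. -/
def swap3 (v : Fin 3 → ℤ) : Fin 3 → ℤ := v ∘ Equiv.swap 1 2

/-- Reflection in the class `(1,1,1)`. -/
def r3 (v : Fin 3 → ℤ) : Fin 3 → ℤ :=
  ![v 0 + 2 * (v 0 - v 1 - v 2), v 1 + 2 * (v 0 - v 1 - v 2), v 2 + 2 * (v 0 - v 1 - v 2)]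

/-- The generating set: the three coordinate negations, the swap of the last two
coordinates, and the reflection `r3`, viewed as ℤ-linear automorphisms of `ℤ³`. -/
def gens3 : Set ((Fin 3 → ℤ) ≃ₗ[ℤ] (Fin 3 → ℤ)) :=
  {e | (∃ j, ⇑e = neg3 j) ∨ ⇑e = swap3 ∨ ⇑e = r3}

/-!
Coordinate negations and the swap put any class in the cone `a ≥ 0`, `b₁ ≥ b₂ ≥ 0` without
changing `|a|`. In that cone, if `Q₃ ≥ 0` but `a < b₁ + b₂`, the reflection `r` strictly lowers
`|a|`: its new first coordinate is `3a - 2(b₁ + b₂)`, and `(b₁ + b₂)² ≤ 2(b₁² + b₂²) ≤ 2a²`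
keeps it above `-a`. Descent on `|a|` therefore ends in the normal form.
-/

open MulAction

notation "G₃" => Subgroup.closure gens3

def involutionEquiv {M : Type*} [AddCommGroup M] (f : M → M) (hadd : ∀ x y, f (x + y) = f x + f y)
    (hf : Function.Involutive f) : M ≃ₗ[ℤ] M :=
  LinearEquiv.ofInvolutive (AddMonoidHom.mk' f hadd).toIntLinearMap hf

theorem apply_eq_of_mem_closure {G α β : Type*} [Group G] [MulAction G α] {s : Set G}
    {f : α → β} (hs : ∀ g ∈ s, ∀ x, f (g • x) = f x) {g : G} (hg : g ∈ Subgroup.closure s)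
    (x : α) : f (g • x) = f x := by
  induction hg using Subgroup.closure_induction generalizing x with
  | mem g hg => exact hs g hg x
  | one => rw [one_smul]
  | mul g h _ _ ihg ihh => rw [mul_smul, ihg, ihh]
  | inv g _ ihg => rw [← ihg, smul_inv_smul]

theorem neg3_add (j : Fin 3) (x y : Fin 3 → ℤ) : neg3 j (x + y) = neg3 j x + neg3 j y := by
  funext i; simp only [neg3, Pi.add_apply]; split <;> ring

theorem neg3_involutive (j : Fin 3) : Function.Involutive (neg3 j) := by
  intro x; funext i; simp only [neg3]; split <;> ring

theorem neg3_eq_update (j : Fin 3) (v : Fin 3 → ℤ) : neg3 j v = Function.update v j (-v j) := by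
  funext i; by_cases h : i = j <;> simp [neg3, h]

theorem swap3_add (x y : Fin 3 → ℤ) : swap3 (x + y) = swap3 x + swap3 y := rfl

theorem swap3_involutive : Function.Involutive swap3 := by
  intro x; funext i; simp [swap3]

theorem r3_add (x y : Fin 3 → ℤ) : r3 (x + y) = r3 x + r3 y := by
  funext i; fin_cases i <;> simp [r3] <;> ring

theorem r3_involutive : Function.Involutive r3 := by
  intro x; funext i; fin_cases i <;> simp [r3] <;> ring

theorem Q3_neg3 (j : Fin 3) (v : Fin 3 → ℤ) : Q3 (neg3 j v) = Q3 v := by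
  fin_cases j <;> simp [Q3, neg3]

theorem Q3_swap3 (v : Fin 3 → ℤ) : Q3 (swap3 v) = Q3 v := by
  simp [Q3, swap3, Equiv.swap_apply_def]; ring

theorem Q3_r3 (v : Fin 3 → ℤ) : Q3 (r3 v) = Q3 v := by
  simp [Q3, r3]; ring

theorem Q3_apply_of_mem_closure {g : (Fin 3 → ℤ) ≃ₗ[ℤ] (Fin 3 → ℤ)} (hg : g ∈ G₃)
    (v : Fin 3 → ℤ) : Q3 (g v) = Q3 v := by
  refine apply_eq_of_mem_closure (f := Q3) ?_ hg v
  rintro e (⟨j, he⟩ | he | he) x <;> rw [LinearEquiv.smul_def, he]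
  exacts [Q3_neg3 j x, Q3_swap3 x, Q3_r3 x]

theorem Q3_eq_of_mem_orbit {v w : Fin 3 → ℤ} (hw : w ∈ orbit G₃ v) : Q3 w = Q3 v := by
  obtain ⟨g, rfl⟩ := hw
  exact Q3_apply_of_mem_closure g.2 v

section Orbit

variable {v w : Fin 3 → ℤ}

theorem apply_mem_orbit_of_mem_gens3 {f : (Fin 3 → ℤ) → Fin 3 → ℤ}
    (hadd : ∀ x y, f (x + y) = f x + f y) (hf : Function.Involutive f)
    (hgen : (∃ j, f = neg3 j) ∨ f = swap3 ∨ f = r3) (hw : w ∈ orbit G₃ v) :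
    f w ∈ orbit G₃ v :=
  mem_orbit_of_mem_orbit (⟨involutionEquiv f hadd hf, Subgroup.subset_closure hgen⟩ : G₃) hw

theorem neg3_mem_orbit (j : Fin 3) (hw : w ∈ orbit G₃ v) : neg3 j w ∈ orbit G₃ v :=
  apply_mem_orbit_of_mem_gens3 (neg3_add j) (neg3_involutive j) (Or.inl ⟨j, rfl⟩) hw

theorem swap3_mem_orbit (hw : w ∈ orbit G₃ v) : swap3 w ∈ orbit G₃ v :=
  apply_mem_orbit_of_mem_gens3 swap3_add swap3_involutive (Or.inr (Or.inl rfl)) hw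

theorem r3_mem_orbit (hw : w ∈ orbit G₃ v) : r3 w ∈ orbit G₃ v :=
  apply_mem_orbit_of_mem_gens3 r3_add r3_involutive (Or.inr (Or.inr rfl)) hw

theorem update_abs_mem_orbit (j : Fin 3) (hw : w ∈ orbit G₃ v) :
    Function.update w j |w j| ∈ orbit G₃ v := by
  rcases abs_choice (w j) with h | h <;> rw [h]
  · rwa [Function.update_eq_self]
  · rw [← neg3_eq_update]
    exact neg3_mem_orbit j hw

theorem abs_mem_orbit (v : Fin 3 → ℤ) : |v| ∈ orbit G₃ v := by
  have h := update_abs_mem_orbit 2 <| update_abs_mem_orbit 1 <|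
    update_abs_mem_orbit 0 (mem_orbit_self v)
  convert h using 1
  funext i; fin_cases i <;> simp

theorem exists_sorted_mem_orbit (v : Fin 3 → ℤ) :
    ∃ w ∈ orbit G₃ v, w 0 = |v 0| ∧ w 2 ≤ w 1 ∧ 0 ≤ w 2 := by
  rcases le_total |v 2| |v 1| with h | h
  · exact ⟨|v|, abs_mem_orbit v, rfl, h, abs_nonneg _⟩
  · exact ⟨swap3 |v|, swap3_mem_orbit (abs_mem_orbit v), by simp [swap3, Equiv.swap_apply_def],
      by simpa [swap3], by simp [swap3]⟩

end Orbit

theorem abs_r3_apply_zero_lt {w : Fin 3 → ℤ} (hQ : 0 ≤ Q3 w) (h0 : 0 ≤ w 0)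
    (hlt : w 0 < w 1 + w 2) : |r3 w 0| < w 0 := by
  unfold Q3 at hQ
  refine abs_lt.mpr ⟨?_, ?_⟩ <;> simp only [r3, Matrix.cons_val_zero]
  · nlinarith [sq_nonneg (w 1 - w 2), sq_nonneg (w 1 + w 2 - 2 * w 0)]
  · linarith

def IsNormalForm (v : Fin 3 → ℤ) : Prop :=
  v 2 ≤ v 1 ∧ 0 ≤ v 2 ∧ v 1 + v 2 ≤ v 0

theorem exists_isNormalForm_mem_orbit (v : Fin 3 → ℤ) (hQ : 0 ≤ Q3 v) :
    ∃ w ∈ orbit G₃ v, IsNormalForm w := by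
  induction h : (v 0).natAbs using Nat.strong_induction_on generalizing v with
  | _ n ih =>
    obtain ⟨w, hw, hw0, h21, h2⟩ := exists_sorted_mem_orbit v
    have hQw : 0 ≤ Q3 w := (Q3_eq_of_mem_orbit hw).symm ▸ hQ
    by_cases hred : w 1 + w 2 ≤ w 0
    · exact ⟨w, hw, h21, h2, hred⟩
    have hlt : (r3 w 0).natAbs < n := by
      rw [← h, ← Int.ofNat_lt, Int.natCast_natAbs, Int.natCast_natAbs, ← hw0]
      exact abs_r3_apply_zero_lt hQw (hw0 ▸ abs_nonneg _) (not_le.mp hred)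
    obtain ⟨u, hu, hured⟩ := ih _ hlt (r3 w) (by rwa [Q3_r3]) rfl
    exact ⟨u, orbit_eq_iff.mpr (r3_mem_orbit hw) ▸ hu, hured⟩

theorem normalization_CP2_2CP2bar :
    (∀ g ∈ Subgroup.closure gens3, ∀ α, Q3 (g α) = Q3 α) ∧
    (∀ α : Fin 3 → ℤ, 0 ≤ Q3 α → ∃ g ∈ Subgroup.closure gens3,
      g α 1 ≥ g α 2 ∧ g α 2 ≥ 0 ∧ g α 0 ≥ g α 1 + g α 2) := by
  refine ⟨fun g hg α => Q3_apply_of_mem_closure hg α, fun α hQ => ?_⟩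
  obtain ⟨_, ⟨g, rfl⟩, hred⟩ := exists_isNormalForm_mem_orbit α hQ
  exact ⟨g, g.2, hred⟩
end

section
/- Let Q₄ : ℤ⁴ → ℤ be the quadratic form Q₄(a, b₁, b₂, b₃) = a² − b₁² − b₂² − b₃². Let G be the subgroup of ℤ-linear automorphisms of ℤ⁴ generated by: the four maps negating one coordinate, the maps permuting the last three coordinates, and the reflection r(a, b₁, b₂, b₃) = (a + c, b₁ + c, b₂ + c, b₃ + c) with c = a − b₁ − b₂ − b₃. Then every element of G preserves Q₄, and for every α ∈ ℤ⁴ with Q₄(α) ≥ 0 there exists g ∈ G such that g(α) = (a, b₁, b₂, b₃) with b₁ ≥ b₂ ≥ b₃ ≥ 0 and a ≥ b₁ + b₂ + b₃. -/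
/-- The intersection form of `CP² # 3CP̄²`. -/
def Q4 (v : Fin 4 → ℤ) : ℤ := v 0 ^ 2 - v 1 ^ 2 - v 2 ^ 2 - v 3 ^ 2

/-- Negation of the `j`-th coordinate. -/
def neg4 (j : Fin 4) (v : Fin 4 → ℤ) : Fin 4 → ℤ := fun i => if i = j then -v i else v i

/-- Reflection in the class `(1,1,1,1)`. -/
def r4 (v : Fin 4 → ℤ) : Fin 4 → ℤ :=
  ![v 0 + (v 0 - v 1 - v 2 - v 3), v 1 + (v 0 - v 1 - v 2 - v 3),
    v 2 + (v 0 - v 1 - v 2 - v 3), v 3 + (v 0 - v 1 - v 2 - v 3)]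

/-- The generating set: the four coordinate negations, the permutations of the last
three coordinates (permutations of `Fin 4` fixing `0`), and the reflection `r4`,
viewed as ℤ-linear automorphisms of `ℤ⁴`. -/
def gens4 : Set ((Fin 4 → ℤ) ≃ₗ[ℤ] (Fin 4 → ℤ)) :=
  {e | (∃ j, ⇑e = neg4 j) ∨ (∃ σ : Equiv.Perm (Fin 4), σ 0 = 0 ∧ ⇑e = fun v => v ∘ σ) ∨
    ⇑e = r4}

/-!
Sign changes and permutations of `b₁, b₂, b₃` preserve `Q₄` trivially, and `r` is the reflection
in the class `(1,1,1,1)` of square `-2`. Sign changes and permutations make all coordinates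
nonnegative and `b₁ ≥ b₂ ≥ b₃` without changing `|a|`. If then `a < b₁ + b₂ + b₃`, the reflection
replaces `a` by `2a - (b₁ + b₂ + b₃)`, and `Q₄ ≥ 0` with Cauchy–Schwarz gives
`b₁ + b₂ + b₃ ≤ √3 a < 3a`, so `|a|` strictly decreases. Hence this descent terminates in a
normalized class.
-/

open Equiv

def neg4LinearEquiv (j : Fin 4) : (Fin 4 → ℤ) ≃ₗ[ℤ] (Fin 4 → ℤ) :=
  LinearEquiv.ofInvolutive
    { toFun := neg4 j
      map_add' := fun u v => by funext i; by_cases h : i = j <;> simp [neg4, h, add_comm]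
      map_smul' := fun c v => by funext i; by_cases h : i = j <;> simp [neg4, h] }
    (fun v => by funext i; by_cases h : i = j <;> simp [neg4, h])

theorem r4_apply (v : Fin 4 → ℤ) (i : Fin 4) : r4 v i = v i + (v 0 - v 1 - v 2 - v 3) := by
  fin_cases i <;> rfl

theorem r4_involutive : Function.Involutive r4 := by
  intro v; funext i; simp only [r4_apply]; ring

def r4LinearEquiv : (Fin 4 → ℤ) ≃ₗ[ℤ] (Fin 4 → ℤ) :=
  LinearEquiv.ofInvolutive
    { toFun := r4
      map_add' := fun u v => by funext i; simp only [r4_apply, Pi.add_apply]; ring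
      map_smul' := fun c v => by
        funext i; simp only [r4_apply, Pi.smul_apply, smul_eq_mul, RingHom.id_apply]; ring }
    r4_involutive

theorem Q4_neg4 (j : Fin 4) (v : Fin 4 → ℤ) : Q4 (neg4 j v) = Q4 v := by
  have hsq (i : Fin 4) : neg4 j v i ^ 2 = v i ^ 2 := by by_cases h : i = j <;> simp [neg4, h]
  simp only [Q4, hsq]

theorem Q4_eq_two_mul_sq_sub_sum (v : Fin 4 → ℤ) : Q4 v = 2 * v 0 ^ 2 - ∑ i, v i ^ 2 := by
  simp only [Q4, Fin.sum_univ_four]; ring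

theorem Q4_comp_perm {σ : Perm (Fin 4)} (hσ : σ 0 = 0) (v : Fin 4 → ℤ) : Q4 (v ∘ σ) = Q4 v := by
  rw [Q4_eq_two_mul_sq_sub_sum, Q4_eq_two_mul_sq_sub_sum, Function.comp_apply, hσ,
    Function.comp_def, Equiv.sum_comp σ (fun i => v i ^ 2)]

theorem Q4_r4 (v : Fin 4 → ℤ) : Q4 (r4 v) = Q4 v := by
  simp only [Q4, r4_apply]; ring

theorem Q4_apply_of_mem_closure {g : (Fin 4 → ℤ) ≃ₗ[ℤ] (Fin 4 → ℤ)}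
    (hg : g ∈ Subgroup.closure gens4) (v : Fin 4 → ℤ) : Q4 (g v) = Q4 v := by
  induction hg using Subgroup.closure_induction generalizing v with
  | mem e he =>
    rcases he with ⟨j, he⟩ | ⟨σ, hσ, he⟩ | he
    · rw [he, Q4_neg4]
    · rw [he, Q4_comp_perm hσ]
    · rw [he, Q4_r4]
  | one => rfl
  | mul x y _ _ hx hy => exact (hx _).trans (hy _)
  | inv x _ hx => rw [← hx, LinearEquiv.coe_inv, LinearEquiv.apply_symm_apply]

def Reaches (v w : Fin 4 → ℤ) : Prop := ∃ g ∈ Subgroup.closure gens4, g v = w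

namespace Reaches

theorem refl (v : Fin 4 → ℤ) : Reaches v v := ⟨1, one_mem _, rfl⟩

theorem trans {u v w : Fin 4 → ℤ} (huv : Reaches u v) (hvw : Reaches v w) : Reaches u w := by
  obtain ⟨g, hg, rfl⟩ := huv
  obtain ⟨h, hh, rfl⟩ := hvw
  exact ⟨h * g, mul_mem hh hg, rfl⟩

theorem Q4_eq {v w : Fin 4 → ℤ} (h : Reaches v w) : Q4 w = Q4 v := by
  obtain ⟨g, hg, rfl⟩ := h
  exact Q4_apply_of_mem_closure hg v

end Reaches

theorem reaches_of_mem_gens4 {g : (Fin 4 → ℤ) ≃ₗ[ℤ] (Fin 4 → ℤ)} (hg : g ∈ gens4)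
    (v : Fin 4 → ℤ) : Reaches v (g v) :=
  ⟨g, Subgroup.subset_closure hg, rfl⟩

theorem reaches_neg4 (j : Fin 4) (v : Fin 4 → ℤ) : Reaches v (neg4 j v) :=
  reaches_of_mem_gens4 (g := neg4LinearEquiv j) (Or.inl ⟨j, rfl⟩) v

theorem reaches_comp_perm {σ : Perm (Fin 4)} (hσ : σ 0 = 0) (v : Fin 4 → ℤ) :
    Reaches v (v ∘ σ) :=
  reaches_of_mem_gens4 (g := LinearEquiv.funCongrLeft ℤ ℤ σ) (Or.inr (Or.inl ⟨σ, hσ, rfl⟩)) v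

theorem reaches_r4 (v : Fin 4 → ℤ) : Reaches v (r4 v) :=
  reaches_of_mem_gens4 (g := r4LinearEquiv) (Or.inr (Or.inr rfl)) v

theorem reaches_update_abs (j : Fin 4) (v : Fin 4 → ℤ) :
    Reaches v (Function.update v j |v j|) := by
  by_cases hj : v j < 0
  · convert reaches_neg4 j v using 1
    funext i
    by_cases h : i = j
    · subst h; simp [neg4, abs_of_neg hj]
    · simp [neg4, h]
  · simpa [abs_of_nonneg (not_lt.mp hj)] using Reaches.refl v

theorem reaches_abs (v : Fin 4 → ℤ) : Reaches v (fun i => |v i|) := by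
  have h := ((((reaches_update_abs 0 v).trans (reaches_update_abs 1 _)).trans
    (reaches_update_abs 2 _)).trans (reaches_update_abs 3 _))
  convert h using 1
  funext i
  fin_cases i <;> simp [Function.update]

theorem exists_perm_sorted (v : Fin 4 → ℤ) :
    ∃ σ : Perm (Fin 4), σ 0 = 0 ∧ v (σ 1) ≥ v (σ 2) ∧ v (σ 2) ≥ v (σ 3) := by
  rcases le_total (v 1) (v 2) with h12 | h12 <;> rcases le_total (v 1) (v 3) with h13 | h13 <;>
    rcases le_total (v 2) (v 3) with h23 | h23
  all_goals first
    | exact ⟨1, rfl, show v 1 ≥ v 2 by omega, show v 2 ≥ v 3 by omega⟩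
    | exact ⟨swap 1 2, rfl, show v 2 ≥ v 1 by omega, show v 1 ≥ v 3 by omega⟩
    | exact ⟨swap 2 3, rfl, show v 1 ≥ v 3 by omega, show v 3 ≥ v 2 by omega⟩
    | exact ⟨swap 1 3, rfl, show v 3 ≥ v 2 by omega, show v 2 ≥ v 1 by omega⟩
    | exact ⟨swap 1 2 * swap 2 3, rfl, show v 2 ≥ v 3 by omega, show v 3 ≥ v 1 by omega⟩
    | exact ⟨swap 2 3 * swap 1 2, rfl, show v 3 ≥ v 1 by omega, show v 1 ≥ v 2 by omega⟩

theorem exists_reaches_nonneg_antitone (v : Fin 4 → ℤ) :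
    ∃ w, Reaches v w ∧ w 0 = |v 0| ∧ (∀ i, 0 ≤ w i) ∧ w 1 ≥ w 2 ∧ w 2 ≥ w 3 := by
  obtain ⟨σ, hσ, h12, h23⟩ := exists_perm_sorted (fun i => |v i|)
  exact ⟨_, (reaches_abs v).trans (reaches_comp_perm hσ _), by simp [hσ],
    fun i => abs_nonneg _, h12, h23⟩

theorem natAbs_r4_apply_zero_lt {w : Fin 4 → ℤ} (hw : ∀ i, 0 ≤ w i) (hQ : 0 ≤ Q4 w)
    (hlt : w 0 < w 1 + w 2 + w 3) : (r4 w 0).natAbs < (w 0).natAbs := by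
  have hsq : w 1 ^ 2 + w 2 ^ 2 + w 3 ^ 2 ≤ w 0 ^ 2 := by unfold Q4 at hQ; linarith
  have hcs : (w 1 + w 2 + w 3) ^ 2 ≤ 3 * w 0 ^ 2 := by
    nlinarith [sq_nonneg (w 1 - w 2), sq_nonneg (w 1 - w 3), sq_nonneg (w 2 - w 3)]
  have hlt3 : w 1 + w 2 + w 3 < 3 * w 0 := by nlinarith [hw 0, hw 1, hw 2, hw 3]
  have hr : r4 w 0 = 2 * w 0 - (w 1 + w 2 + w 3) := by rw [r4_apply]; ring
  omega

def IsNormalized (v : Fin 4 → ℤ) : Prop :=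
  v 1 ≥ v 2 ∧ v 2 ≥ v 3 ∧ v 3 ≥ 0 ∧ v 0 ≥ v 1 + v 2 + v 3

theorem exists_reaches_isNormalized (v : Fin 4 → ℤ) (hv : 0 ≤ Q4 v) :
    ∃ w, Reaches v w ∧ IsNormalized w := by
  induction hn : (v 0).natAbs using Nat.strong_induction_on generalizing v with
  | _ n ih =>
  obtain ⟨w, hvw, hw0, hw, h12, h23⟩ := exists_reaches_nonneg_antitone v
  by_cases hsum : w 1 + w 2 + w 3 ≤ w 0
  · exact ⟨w, hvw, h12, h23, hw 3, hsum⟩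
  have hQ : 0 ≤ Q4 w := hvw.Q4_eq ▸ hv
  have hdesc : (r4 w 0).natAbs < n := by
    rw [← hn, ← Int.natAbs_abs (v 0), ← hw0]
    exact natAbs_r4_apply_zero_lt hw hQ (not_le.mp hsum)
  obtain ⟨u, hu, hnorm⟩ := ih _ hdesc (r4 w) (by rwa [Q4_r4]) rfl
  exact ⟨u, hvw.trans ((reaches_r4 w).trans hu), hnorm⟩

theorem normalization_CP2_3CP2bar :
    (∀ g ∈ Subgroup.closure gens4, ∀ α, Q4 (g α) = Q4 α) ∧
    (∀ α : Fin 4 → ℤ, 0 ≤ Q4 α → ∃ g ∈ Subgroup.closure gens4,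
      g α 1 ≥ g α 2 ∧ g α 2 ≥ g α 3 ∧ g α 3 ≥ 0 ∧
      g α 0 ≥ g α 1 + g α 2 + g α 3) := by
  refine ⟨fun g hg => Q4_apply_of_mem_closure hg, fun α hα => ?_⟩
  obtain ⟨_, ⟨g, hg, rfl⟩, hnorm⟩ := exists_reaches_isNormalized α hα
  exact ⟨g, hg, hnorm⟩
end
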